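/- arXiv:2505.00424 — 6 statements merged into one kernel-verified Lean document; each statement's English description precedes it below -/
import Mathlib

section
/- If ⊕ : Ordinal → Ordinal → Ordinal is a binary operation on the ordinals that is strictly monotone in each argument (i.e., for all ordinals, α' < α implies α' ⊕ β < α ⊕ β, and β' < β implies α ⊕ β' < α ⊕ β), then α ♯ β ≤ α ⊕ β for all ordinals α and β. In other words, the Hessenberg natural sum is the smallest binary operation on the ordinals that is strictly monotone in both arguments. -/
universe u

/-- Natural addition on ordinals (Hessenberg sum), as in the removed Mathlib file
`Mathlib/SetTheory/Ordinal/NaturalOps.lean`. -/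
noncomputable def Ordinal.nadd (a b : Ordinal.{u}) : Ordinal.{u} :=
  max (⨆ x : Set.Iio a, Order.succ (Ordinal.nadd x.1 b))
    (⨆ x : Set.Iio b, Order.succ (Ordinal.nadd a x.1))
termination_by (a, b)
decreasing_by
  · cases x with
    | mk v h => exact Prod.Lex.left _ _ h
  · cases x with
    | mk v h => exact Prod.Lex.right _ h

infixl:65 " ♯ " => Ordinal.nadd

theorem Ordinal.nadd_le_of_forall {a b c : Ordinal.{u}}
    (h : (∀ a' < a, a' ♯ b < c) ∧ (∀ b' < b, a ♯ b' < c)) : a ♯ b ≤ c := by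
  rw [Ordinal.nadd]
  exact max_le (Ordinal.iSup_le fun x => Order.succ_le_of_lt (h.1 x.1 x.2))
    (Ordinal.iSup_le fun x => Order.succ_le_of_lt (h.2 x.1 x.2))

/-- The Hessenberg natural sum is the smallest binary operation on the ordinals that is
strictly monotone in both arguments. -/
theorem nadd_le_of_strictMono_both
    (op : Ordinal → Ordinal → Ordinal)
    (hleft : ∀ α' α β : Ordinal, α' < α → op α' β < op α β)
    (hright : ∀ α β' β : Ordinal, β' < β → op α β' < op α β) :
    ∀ α β : Ordinal, α ♯ β ≤ op α β := by
  intro α β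
  induction α using Ordinal.induction generalizing β with
  | _ α IHα =>
  induction β using Ordinal.induction with
  | _ β IHβ =>
  apply Ordinal.nadd_le_of_forall
  refine ⟨fun α' hα' => ?_, fun β' hβ' => ?_⟩
  · exact lt_of_le_of_lt (IHα α' hα' β) (hleft α' α β hα')
  · exact lt_of_le_of_lt (IHβ β' hβ') (hright α β' β hβ')
end

section
/- There is no function f : (ℕ → Ordinal) → Ordinal that is strictly increasing in each argument; that is, there is no f such that for every sequence a : ℕ → Ordinal, every index i : ℕ, and every ordinal γ < a i, f (Function.update a i γ) < f a. -/
/-- There is no everywhere defined infinitary operation on `ω`-indexed sequences of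
ordinals which is strictly increasing in each argument. -/
theorem no_strictly_monotone_infinitary_operation :
    ¬ ∃ f : (ℕ → Ordinal) → Ordinal,
        ∀ (a : ℕ → Ordinal) (i : ℕ) (γ : Ordinal),
          γ < a i → f (Function.update a i γ) < f a := by
  rintro ⟨f, hf⟩
  set A : ℕ → ℕ → Ordinal := fun k n => if n < k then 0 else 1 with hA
  have key : ∀ k, f (A (k + 1)) < f (A k) := by
    intro k
    have h1 : A (k + 1) = Function.update (A k) k 0 := by
      funext n
      simp only [hA, Function.update_apply, Nat.lt_succ_iff]
      split_ifs <;> first | rfl | omega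
    rw [h1]
    exact hf (A k) k 0 (by simp [hA])
  exact (RelEmbedding.natGT (fun k => f (A k)) key).not_wellFounded
    Ordinal.lt_wf
end

section
/- Let P be a preorder containing two elements x, y with x < y. Then there is no function f : (ℕ → P) → Ordinal that is strictly increasing in each argument, i.e., such that for every sequence a : ℕ → P, every index i : ℕ, and every p : P with p < a i, f (Function.update a i p) < f a. -/
/-- If `P` is a preorder with two elements `x < y`, then there is no ordinal-valued function
on `ω`-indexed sequences of elements of `P` which is strictly increasing in each argument. -/
theorem no_strictly_monotone_infinitary_operation_of_preorder
    {P : Type*} [Preorder P] (x y : P) (hxy : x < y) :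
    ¬ ∃ f : (ℕ → P) → Ordinal,
        ∀ (a : ℕ → P) (i : ℕ) (p : P),
          p < a i → f (Function.update a i p) < f a := by
  rintro ⟨f, hf⟩
  set a : ℕ → ℕ → P := fun n i => if i < n then x else y with ha
  have key : ∀ n, f (a (n + 1)) < f (a n) := by
    intro n
    have hupd : Function.update (a n) n x = a (n + 1) := by
      funext i
      rcases eq_or_ne i n with rfl | h
      · simp [ha, Function.update_self]
      · simp only [Function.update_of_ne h, ha]
        rcases lt_trichotomy i n with h1 | h1 | h1
        · simp [h1, h1.trans (Nat.lt_succ_self n)]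
        · exact absurd h1 h
        · simp [Nat.not_lt.mpr h1, Nat.not_lt.mpr h1]
          omega
    have : x < a n n := by simp [ha, hxy]
    have := hf (a n) n x this
    rwa [hupd] at this
  exact RelEmbedding.not_wellFounded (RelEmbedding.natGT (fun n => f (a n)) key) Ordinal.lt_wf
end

section
/- Let f : (ℕ → Ordinal) → Ordinal be weakly monotone and invariant under prepending 0, i.e., f (0⌢a) = f a for every sequence a, where (0⌢a) 0 = 0 and (0⌢a) (i+1) = a i. Then for every nondecreasing sequence a : ℕ → Ordinal (a i ≤ a j whenever i ≤ j) and every ordinal γ ≤ a 0, f (Function.update a 0 γ) = f a; in particular, f is not strictly monotone in the first argument at any nondecreasing sequence with a 0 > 0. -/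
/-!
Lowering the first entry of a nondecreasing sequence `a` to `γ` only moves it down, yet the
result still dominates `0 ⌢ a`, because `a i ≤ a (i + 1)`. Invariance under prepending `0`
then squeezes `f (update a 0 γ)` between two copies of `f a`.
-/

open Function

section Prepend

variable {α β : Type*} [Preorder α]

theorem Stream'.cons_le_update_zero {a : ℕ → α} (ha : Monotone a) {z γ : α} (hz : z ≤ γ) :
    ∀ i, Stream'.cons z a i ≤ update a 0 γ i
  | 0 => by simpa [Stream'.cons] using hz
  | i + 1 => by simpa [Stream'.cons] using ha i.le_succ

theorem Monotone.apply_update_zero_eq [PartialOrder β] {f : (ℕ → α) → β} (hf : Monotone f)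
    {z : α} (hcons : ∀ a, f (Stream'.cons z a) = f a) {a : ℕ → α} (ha : Monotone a) {γ : α}
    (hz : z ≤ γ) (hγ : γ ≤ a 0) : f (update a 0 γ) = f a :=
  le_antisymm (hf (update_le_self_iff.mpr hγ))
    (hcons a ▸ hf (Stream'.cons_le_update_zero ha hz))

end Prepend

/-- If `f` is weakly monotone and invariant under prepending `0` to a sequence, then on any
nondecreasing sequence `a`, decreasing the first entry to any `γ ≤ a 0` does not change
the value of `f`; in particular `f` is not strictly monotone in the first argument at any
nondecreasing sequence with nonzero first entry. -/
theorem not_strictMono_first_of_monotone_and_zero_neutral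
    (f : (ℕ → Ordinal) → Ordinal)
    (hmono : ∀ a b : ℕ → Ordinal, (∀ i, a i ≤ b i) → f a ≤ f b)
    (hzero : ∀ a : ℕ → Ordinal,
      f (fun n => match n with | 0 => 0 | (i + 1) => a i) = f a) :
    (∀ a : ℕ → Ordinal, Monotone a → ∀ γ : Ordinal, γ ≤ a 0 →
        f (Function.update a 0 γ) = f a) ∧
      ∀ a : ℕ → Ordinal, Monotone a → 0 < a 0 → ∀ γ : Ordinal, γ < a 0 →
        ¬ f (Function.update a 0 γ) < f a := by
  have update_zero_eq : ∀ a : ℕ → Ordinal, Monotone a → ∀ γ : Ordinal, γ ≤ a 0 →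
      f (update a 0 γ) = f a := fun a ha γ hγ =>
    Monotone.apply_update_zero_eq (fun _ _ h => hmono _ _ h) hzero ha zero_le hγ
  exact ⟨update_zero_eq, fun a ha _ γ hγ => (update_zero_eq a ha γ hγ.le).not_lt⟩
end

section
/- If S : (ℕ → Ordinal) → Ordinal is strictly monotone on e-special elements, then S is strictly monotone on the characteristic ε: for all sequences a, b : ℕ → Ordinal with a i ≤ b i for every i and ε_a < ε_b, one has S a < S b. -/
/-! Since `ε_a < ε_b`, infinitely many `b i` are `≥ ε_a` while only finitely many `a i` are; any
index `j` of the first kind but not the second has `a j < ε_a ≤ b j`, which is what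
`StrictMonoOnESpecial` asks for. -/

/-- `ε_a`: the least ordinal `ε` such that `{i | ε ≤ a i}` is finite. -/
noncomputable def epsSeq (a : ℕ → Ordinal) : Ordinal :=
  sInf {ε : Ordinal | {i : ℕ | ε ≤ a i}.Finite}

/-- `S` is strictly monotone on e-special elements. -/
def StrictMonoOnESpecial (S : (ℕ → Ordinal) → Ordinal) : Prop :=
  ∀ a b : ℕ → Ordinal, (∀ i, a i ≤ b i) →
    (∃ j : ℕ, epsSeq a ≤ b j ∧ a j < b j) → S a < S b

/- The infimum is attained: its set is nonempty, containing any strict upper bound of `a`. -/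
lemma finite_setOf_epsSeq_le (a : ℕ → Ordinal) : {i | epsSeq a ≤ a i}.Finite := by
  refine csInf_mem (⟨(⨆ i, a i) + 1, ?_⟩ : {ε : Ordinal | {i | ε ≤ a i}.Finite}.Nonempty)
  have hempty : {i | (⨆ i, a i) + 1 ≤ a i} = ∅ :=
    Set.eq_empty_of_forall_notMem fun i hi =>
      (Ordinal.le_iSup a i).not_gt (Order.add_one_le_iff.mp hi)
  simp only [Set.mem_ofPred_eq, hempty, Set.finite_empty]

lemma infinite_setOf_le_of_lt_epsSeq {b : ℕ → Ordinal} {ε : Ordinal} (hε : ε < epsSeq b) :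
    {i | ε ≤ b i}.Infinite :=
  fun hfin => (csInf_le' (s := {ε | {i | ε ≤ b i}.Finite}) hfin).not_gt hε

/-- An operation strictly monotone on e-special elements is strictly monotone on the
characteristic `ε`. -/
theorem strictMono_eps_of_strictMonoOnESpecial
    (S : (ℕ → Ordinal) → Ordinal) (hS : StrictMonoOnESpecial S) :
    ∀ a b : ℕ → Ordinal, (∀ i, a i ≤ b i) → epsSeq a < epsSeq b → S a < S b := by
  intro a b hab heps
  refine hS a b hab ?_
  obtain ⟨j, hbj, haj⟩ :=
    ((infinite_setOf_le_of_lt_epsSeq heps).sdiff (finite_setOf_epsSeq_le a)).nonempty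
  exact ⟨j, hbj, (not_le.mp haj).trans_le hbj⟩
end

section
/- The relation ≺ on sequences ℕ → Ordinal is irreflexive, transitive, and well-founded. -/
/-!
Every coordinate of a `≺`-descending chain `a₀ ≻ a₁ ≻ ⋯` is non-increasing, hence eventually
constant. Take `n₀` with `βₙ₀` least among the bounds `βₙ` and then `M > n₀` so late that the
finitely many coordinates in `Fₙ₀` are already constant. Step `M` strictly decreases coordinate
`iₘ`, so `iₘ ∉ Fₙ₀`; but then `aₘ iₘ ≤ aₙ₀₊₁ iₘ ≤ βₙ₀ ≤ βₘ < aₘ iₘ`.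
-/

open Filter

/-- `b ≺ a` iff there are an index `i₀`, a finite set `F ⊆ ℕ` and an ordinal `β` with
`b i₀ ≤ β < a i₀`, `b i ≤ a i` for all `i`, and `b i ≤ β` for all `i ∉ F`. -/
def seqPrec (b a : ℕ → Ordinal) : Prop :=
  ∃ (i₀ : ℕ) (F : Finset ℕ) (β : Ordinal),
    b i₀ ≤ β ∧ β < a i₀ ∧ (∀ i, b i ≤ a i) ∧ ∀ i ∉ F, b i ≤ β

theorem Antitone.eventually_succ_eq {α : Type*} [PartialOrder α] [WellFoundedLT α] {f : ℕ → α}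
    (hf : Antitone f) : ∀ᶠ n in atTop, f (n + 1) = f n := by
  obtain ⟨N, hN⟩ := WellFoundedLT.antitone_chain_condition hf
  exact eventually_atTop.2 ⟨N, fun n hn => (hN _ (hn.trans n.le_succ)).symm.trans (hN n hn)⟩

theorem seqPrec_irrefl (a : ℕ → Ordinal) : ¬ seqPrec a a := by
  rintro ⟨i₀, F, β, hle, hlt, -, -⟩
  exact hle.not_gt hlt

theorem seqPrec_trans {a b c : ℕ → Ordinal} (hcb : seqPrec c b) (hba : seqPrec b a) :
    seqPrec c a := by
  obtain ⟨-, -, -, -, -, hcb, -⟩ := hcb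
  obtain ⟨i₀, F, β, hle, hlt, hba, hbound⟩ := hba
  exact ⟨i₀, F, β, (hcb i₀).trans hle, hlt, fun i => (hcb i).trans (hba i),
    fun i hi => (hcb i).trans (hbound i hi)⟩

theorem seqPrec_wellFounded : WellFounded seqPrec := by
  refine wellFounded_iff_isEmpty_descending_chain.2 ⟨fun ⟨a, ha⟩ => ?_⟩
  choose i F β hle hlt hmono hbound using ha
  have anti (j : ℕ) : Antitone (a · j) := antitone_nat_of_succ_le fun n => hmono n j
  set n₀ := Function.argmin β
  obtain ⟨M, hM, hstable⟩ := ((eventually_gt_atTop n₀).and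
    ((eventually_all_finset (F n₀)).2 fun j _ => (anti j).eventually_succ_eq)).exists
  have hdrop : a (M + 1) (i M) < a M (i M) := (hle M).trans_lt (hlt M)
  by_cases hi : i M ∈ F n₀
  · exact hdrop.ne (hstable _ hi)
  · have : a M (i M) ≤ β M :=
      calc a M (i M) ≤ a (n₀ + 1) (i M) := anti _ hM
        _ ≤ β n₀ := hbound n₀ _ hi
        _ ≤ β M := Function.argmin_le β M
    exact this.not_gt (hlt M)

/-- The relation `≺` on `ω`-indexed sequences of ordinals is irreflexive, transitive, and
well-founded. -/
theorem seqPrec_irrefl_trans_wellFounded :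
    (∀ a : ℕ → Ordinal, ¬ seqPrec a a) ∧
      (∀ a b c : ℕ → Ordinal, seqPrec c b → seqPrec b a → seqPrec c a) ∧
      WellFounded seqPrec :=
  ⟨seqPrec_irrefl, fun _ _ _ => seqPrec_trans, seqPrec_wellFounded⟩
end
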